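/- Let h_n be the theoretical Hirsch index and suppose j ≥ 2h_n + 1 with j ≤ n. Then v_{j,n}·x_{j,n} = j(1 − n·S(j−1)/j) ≥ j/2 and v_{j,n}^2 ≤ n·S(j−1) ≤ j; consequently x_{j,n} ≥ √j/2. -/

import Mathlib

/-!
Write `H = h_n`. Above `H` the defining property reads `n S₋(y) < y`; letting `y ↓ t` gives
`n S(t) ≤ t` for every `t ≥ H`. Then even `n S(t) ≤ H`: otherwise `y = n S(t)` lies in `(H, t]`
and `n S(t) ≤ n S₋(y) < y = n S(t)`. For `t = j - 1 ≥ 2H` this gives `n S(j-1) ≤ (j-1)/2`, hence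
`v x = j - n S(j-1) ≥ j/2`, while `v² = n S (1 - S) ≤ n S ≤ j`; dividing, `x ≥ (j/2)/√j = √j/2`.
-/

open MeasureTheory ProbabilityTheory Filter Topology

noncomputable def hirschIndex (c : ℝ) (F : ℝ → ℝ) : ℝ :=
  sSup {x : ℝ | 0 ≤ x ∧ x ≤ c * F x}

section HirschIndex

variable {c : ℝ} {F G : ℝ → ℝ}

lemma bddAbove_hirschSet (hc : 0 ≤ c) (hF : ∀ x, F x ≤ 1) :
    BddAbove {x : ℝ | 0 ≤ x ∧ x ≤ c * F x} :=
  ⟨c, fun x hx => hx.2.trans (by simpa using mul_le_mul_of_nonneg_left (hF x) hc)⟩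

lemma hirschIndex_nonneg (hc : 0 ≤ c) (hF0 : ∀ x, 0 ≤ F x) (hF : ∀ x, F x ≤ 1) :
    0 ≤ hirschIndex c F :=
  le_csSup (bddAbove_hirschSet hc hF) ⟨le_rfl, mul_nonneg hc (hF0 0)⟩

lemma mul_lt_of_hirschIndex_lt (hc : 0 ≤ c) (hF0 : ∀ x, 0 ≤ F x) (hF : ∀ x, F x ≤ 1)
    {y : ℝ} (hy : hirschIndex c F < y) : c * F y < y := by
  by_contra! hle
  have hmem : y ∈ {x : ℝ | 0 ≤ x ∧ x ≤ c * F x} :=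
    ⟨(hirschIndex_nonneg hc hF0 hF).trans hy.le, hle⟩
  exact (le_csSup (bddAbove_hirschSet hc hF) hmem).not_gt hy

lemma mul_le_of_hirschIndex_le (hc : 0 ≤ c) (hF0 : ∀ x, 0 ≤ F x) (hF : ∀ x, F x ≤ 1) {t : ℝ}
    (hlim : Tendsto (fun k : ℕ => F (t + 1 / (k + 1))) atTop (𝓝 (G t)))
    (ht : hirschIndex c F ≤ t) : c * G t ≤ t :=
  le_of_tendsto_of_tendsto' (hlim.const_mul c)
    (by simpa using tendsto_const_nhds.add (tendsto_one_div_add_atTop_nhds_zero_nat (𝕜 := ℝ)))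
    fun k => (mul_lt_of_hirschIndex_lt hc hF0 hF
      (by have : (0 : ℝ) < 1 / (k + 1) := by positivity
          linarith)).le

lemma mul_le_hirschIndex (hc : 0 ≤ c) (hF0 : ∀ x, 0 ≤ F x) (hF : ∀ x, F x ≤ 1)
    (hGF : ∀ y t, y ≤ t → G t ≤ F y) {t : ℝ}
    (hlim : Tendsto (fun k : ℕ => F (t + 1 / (k + 1))) atTop (𝓝 (G t)))
    (ht : hirschIndex c F ≤ t) : c * G t ≤ hirschIndex c F := by
  by_contra! hlt
  have hGF' : c * G t ≤ c * F (c * G t) :=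
    mul_le_mul_of_nonneg_left (hGF _ _ (mul_le_of_hirschIndex_le hc hF0 hF hlim ht)) hc
  linarith [mul_lt_of_hirschIndex_lt hc hF0 hF hlt]

end HirschIndex

section Standardization

variable {m p j : ℝ}

lemma sq_sqrt_mul_one_sub_le (hmp : 0 ≤ m * p) (hp0 : 0 ≤ p) (hp1 : p ≤ 1) :
    Real.sqrt (m * p * (1 - p)) ^ 2 ≤ m * p := by
  rw [Real.sq_sqrt (mul_nonneg hmp (by linarith))]
  nlinarith [mul_nonneg hmp hp0]

lemma sqrt_mul_one_sub_pos (hmp : 0 < m * p) (hp1 : p < 1) :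
    0 < Real.sqrt (m * p * (1 - p)) :=
  Real.sqrt_pos.mpr (mul_pos hmp (by linarith))

lemma sqrt_div_two_le_standardized (hp : 0 < p) (hj : 0 < j) (hjm : j ≤ m)
    (hmp : m * p ≤ j / 2) :
    Real.sqrt j / 2 ≤ (j - m * p) / Real.sqrt (m * p * (1 - p)) := by
  have hmp0 : 0 < m * p := mul_pos (by linarith) hp
  have hp1 : p < 1 := by nlinarith
  set σ := Real.sqrt (m * p * (1 - p))
  have hσ : 0 < σ := sqrt_mul_one_sub_pos hmp0 hp1
  have hσj : σ ≤ Real.sqrt j :=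
    Real.le_sqrt_of_sq_le ((sq_sqrt_mul_one_sub_le hmp0.le hp.le hp1.le).trans (by linarith))
  rw [le_div_iff₀ hσ]
  calc Real.sqrt j / 2 * σ ≤ Real.sqrt j / 2 * Real.sqrt j := by gcongr
    _ = j / 2 := by rw [div_mul_eq_mul_div, Real.mul_self_sqrt hj.le]
    _ ≤ j - m * p := by linarith

end Standardization

section Tails

variable {Ω : Type*} [MeasurableSpace Ω] (μ : Measure Ω) [IsFiniteMeasure μ] (X : Ω → ℝ)

lemma toReal_measure_lt_le_toReal_measure_le {y t : ℝ} (hyt : y ≤ t) :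
    (μ {ω | t < X ω}).toReal ≤ (μ {ω | y ≤ X ω}).toReal :=
  ENNReal.toReal_mono (measure_ne_top _ _) (measure_mono fun _ hω => hyt.trans (le_of_lt hω))

lemma tendsto_toReal_measure_add_one_div_le (t : ℝ) :
    Tendsto (fun k : ℕ => (μ {ω | t + 1 / (k + 1) ≤ X ω}).toReal) atTop
      (𝓝 (μ {ω | t < X ω}).toReal) := by
  have hmono : Monotone fun k : ℕ => {ω | t + 1 / ((k : ℝ) + 1) ≤ X ω} :=
    fun k l hkl ω (hω : t + 1 / ((k : ℝ) + 1) ≤ X ω) => show t + 1 / ((l : ℝ) + 1) ≤ X ω by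
      have : 1 / ((l : ℝ) + 1) ≤ 1 / ((k : ℝ) + 1) := by gcongr
      linarith
  have hunion : (⋃ k : ℕ, {ω | t + 1 / ((k : ℝ) + 1) ≤ X ω}) = {ω | t < X ω} := by
    ext ω
    simp only [Set.mem_iUnion, Set.mem_ofPred_eq]
    refine ⟨fun ⟨k, hk⟩ => (lt_add_of_pos_right t (by positivity)).trans_le hk, fun hω => ?_⟩
    obtain ⟨k, hk⟩ := exists_nat_one_div_lt (sub_pos.mpr hω)
    exact ⟨k, by linarith⟩
  have := tendsto_measure_iUnion_atTop (μ := μ) hmono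
  rw [hunion] at this
  exact (ENNReal.tendsto_toReal (measure_ne_top _ _)).comp this

end Tails

theorem hirsch_tail_inequalities_general
    {Ω : Type*} [MeasureSpace Ω] [IsProbabilityMeasure (ℙ : Measure Ω)]
    (X : Ω → ℝ)
    (S Sm : ℝ → ℝ)
    (hS : ∀ x, S x = (ℙ {ω | x < X ω}).toReal)
    (hSm : ∀ x, Sm x = (ℙ {ω | x ≤ X ω}).toReal)
    (hSpos : ∀ x, 0 < S x)
    (h : ℕ → ℝ)
    (hh : ∀ n : ℕ, h n = sSup {x : ℝ | 0 ≤ x ∧ x ≤ n * Sm x})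
    (v : ℕ → ℕ → ℝ)
    (hv : ∀ j n, v j n = Real.sqrt (n * S ((j : ℝ) - 1) * (1 - S ((j : ℝ) - 1))))
    (x : ℕ → ℕ → ℝ)
    (hx : ∀ j n, x j n = ((j : ℝ) - n * S ((j : ℝ) - 1)) / v j n) :
    ∀ n : ℕ, 1 ≤ n → ∀ j : ℕ, j ≤ n → 2 * h n + 1 ≤ (j : ℝ) →
      v j n * x j n = j * (1 - n * S ((j : ℝ) - 1) / j) ∧
      (j : ℝ) / 2 ≤ v j n * x j n ∧
      (v j n) ^ 2 ≤ n * S ((j : ℝ) - 1) ∧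
      n * S ((j : ℝ) - 1) ≤ j ∧
      Real.sqrt j / 2 ≤ x j n := by
  intro n _ j hjn hj
  have hSm0 : ∀ y, 0 ≤ Sm y := fun y => (hSm y).symm ▸ ENNReal.toReal_nonneg
  have hSm1 : ∀ y, Sm y ≤ 1 := fun y => (hSm y).symm ▸ measureReal_le_one
  have hSSm : ∀ y t, y ≤ t → S t ≤ Sm y := fun y t hyt =>
    (hS t).symm ▸ (hSm y).symm ▸ toReal_measure_lt_le_toReal_measure_le ℙ X hyt
  have hlim : Tendsto (fun k : ℕ => Sm (j - 1 + 1 / (k + 1))) atTop (𝓝 (S (j - 1))) := by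
    simpa only [hS, hSm] using tendsto_toReal_measure_add_one_div_le ℙ X (j - 1)
  rw [show h n = hirschIndex n Sm from hh n] at hj
  have h0 := hirschIndex_nonneg n.cast_nonneg hSm0 hSm1
  have hnS : n * S (j - 1) ≤ hirschIndex n Sm :=
    mul_le_hirschIndex n.cast_nonneg hSm0 hSm1 hSSm hlim (by linarith)
  have hp := hSpos (j - 1)
  have hj0 : (0 : ℝ) < j := by linarith
  have hjn' : (j : ℝ) ≤ n := by exact_mod_cast hjn
  have hnp0 : 0 < n * S (j - 1) := mul_pos (by linarith) hp
  have hvpos : 0 < v j n := hv j n ▸ sqrt_mul_one_sub_pos hnp0 (by nlinarith)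
  have hvx : v j n * x j n = j - n * S (j - 1) := by
    rw [hx, mul_div_cancel₀ _ hvpos.ne']
  refine ⟨by rw [hvx, mul_one_sub, mul_div_cancel₀ _ hj0.ne'], by rw [hvx]; linarith,
    hv j n ▸ sq_sqrt_mul_one_sub_le hnp0.le hp.le (by nlinarith), by linarith, ?_⟩
  rw [hx, hv]
  exact sqrt_div_two_le_standardized hp hj0 hjn' (by linarith)

/-- for `j ≥ 2h_n + 1`, `j ≤ n`, one has
`v_{j,n} x_{j,n} = j(1 − nS(j−1)/j) ≥ j/2`, `v_{j,n}² ≤ nS(j−1) ≤ j`, hence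
`x_{j,n} ≥ √j/2`. -/
theorem hirsch_tail_inequalities
    {Ω : Type*} [MeasureSpace Ω] [IsProbabilityMeasure (ℙ : Measure Ω)]
    (X : Ω → ℝ) (hX : Measurable X) (hXpos : ∀ ω, 0 < X ω)
    (S Sm : ℝ → ℝ)
    (hS : ∀ x, S x = (ℙ {ω | x < X ω}).toReal)
    (hSm : ∀ x, Sm x = (ℙ {ω | x ≤ X ω}).toReal)
    (hSpos : ∀ x, 0 < S x)
    (h : ℕ → ℝ)
    (hh : ∀ n : ℕ, h n = sSup {x : ℝ | 0 ≤ x ∧ x ≤ n * Sm x})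
    (v : ℕ → ℕ → ℝ)
    (hv : ∀ j n, v j n = Real.sqrt (n * S ((j : ℝ) - 1) * (1 - S ((j : ℝ) - 1))))
    (x : ℕ → ℕ → ℝ)
    (hx : ∀ j n, x j n = ((j : ℝ) - n * S ((j : ℝ) - 1)) / v j n) :
    ∀ n : ℕ, 1 ≤ n → ∀ j : ℕ, j ≤ n → 2 * h n + 1 ≤ (j : ℝ) →
      v j n * x j n = j * (1 - n * S ((j : ℝ) - 1) / j) ∧
      (j : ℝ) / 2 ≤ v j n * x j n ∧
      (v j n) ^ 2 ≤ n * S ((j : ℝ) - 1) ∧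
      n * S ((j : ℝ) - 1) ≤ j ∧
      Real.sqrt j / 2 ≤ x j n :=
  hirsch_tail_inequalities_general X S Sm hS hSm hSpos h hh v hv x hx
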